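/- Let φ be a tight inclusion of a persistence module M into a persistence module N over J, let a < t < b be elements of J, assume N_t is finite-dimensional, and let q : N_t → N_t / W^N_t(a,b) be the natural quotient map. Then dim q(φ_t(V^M_t(a,b))) = dim V^M_t(a,b) − dim W^M_t(a,b). -/

import Mathlib

/-- A persistence module over a set `J ⊆ ℝ` of scales: a family of `F`-vector spaces
together with commuting linear bonding maps. -/
structure PersistenceModule (F : Type*) [Field F] (J : Set ℝ) where
  space : J → Type*
  [addCommGroup : ∀ r : J, AddCommGroup (space r)]
  [module : ∀ r : J, Module F (space r)]
  bond : ∀ r r' : J, (r : ℝ) ≤ (r' : ℝ) → (space r →ₗ[F] space r')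
  bond_refl : ∀ r : J, bond r r le_rfl = LinearMap.id
  bond_comp : ∀ (r r' r'' : J) (h : (r : ℝ) ≤ (r' : ℝ)) (h' : (r' : ℝ) ≤ (r'' : ℝ)),
    (bond r' r'' h').comp (bond r r' h) = bond r r'' (h.trans h')

attribute [instance] PersistenceModule.addCommGroup PersistenceModule.module

/-- An inclusion of persistence modules: a family of injective linear maps commuting
with the bonding maps. -/
structure PersistenceModule.Inclusion {F : Type*} [Field F] {J : Set ℝ}
    (M N : PersistenceModule F J) where
  toFun : ∀ r : J, M.space r →ₗ[F] N.space r
  injective : ∀ r : J, Function.Injective (toFun r)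
  comm : ∀ (r r' : J) (h : (r : ℝ) ≤ (r' : ℝ)),
    (toFun r').comp (M.bond r r' h) = (N.bond r r' h).comp (toFun r)

/-- An inclusion `φ` of persistence modules is *tight* if for all `r' < r` in `J`,
`φ_r(Im ρ^M_{r',r}) = (range φ_r) ∩ Im ρ^N_{r',r}`. -/
def PersistenceModule.Inclusion.Tight {F : Type*} [Field F] {J : Set ℝ}
    {M N : PersistenceModule F J} (φ : M.Inclusion N) : Prop :=
  ∀ (r' r : J) (h : (r' : ℝ) < (r : ℝ)),
    (LinearMap.range (M.bond r' r h.le)).map (φ.toFun r) =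
      LinearMap.range (φ.toFun r) ⊓ LinearMap.range (N.bond r' r h.le)

/-- `V^P_t(a,b) = ⋂_{s ∈ J, a < s < t} Im ρ^P_{s,t} ∩ ⋂_{s ∈ J, s > b} ker ρ^P_{t,s}`. -/
noncomputable def PersistenceModule.V {F : Type*} [Field F] {J : Set ℝ}
    (P : PersistenceModule F J) (a t b : J) (htb : (t : ℝ) < (b : ℝ)) :
    Submodule F (P.space t) :=
  (⨅ s : J, ⨅ h : (a : ℝ) < (s : ℝ) ∧ (s : ℝ) < (t : ℝ),
      LinearMap.range (P.bond s t h.2.le)) ⊓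
  (⨅ s : J, ⨅ h : (b : ℝ) < (s : ℝ),
      LinearMap.ker (P.bond t s (htb.trans h).le))

/-- `W^P_t(a,b) = (Im ρ^P_{a,t} ∩ ⋂_{s ∈ J, s > b} ker ρ^P_{t,s})
      + (⋂_{s ∈ J, a < s < t} Im ρ^P_{s,t} ∩ ker ρ^P_{t,b})`. -/
noncomputable def PersistenceModule.W {F : Type*} [Field F] {J : Set ℝ}
    (P : PersistenceModule F J) (a t b : J)
    (hat : (a : ℝ) < (t : ℝ)) (htb : (t : ℝ) < (b : ℝ)) :
    Submodule F (P.space t) :=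
  (LinearMap.range (P.bond a t hat.le) ⊓
    (⨅ s : J, ⨅ h : (b : ℝ) < (s : ℝ),
      LinearMap.ker (P.bond t s (htb.trans h).le))) ⊔
  ((⨅ s : J, ⨅ h : (a : ℝ) < (s : ℝ) ∧ (s : ℝ) < (t : ℝ),
      LinearMap.range (P.bond s t h.2.le)) ⊓
    LinearMap.ker (P.bond t b htb.le))

/-!
Writing `V`, `W` for `V^M_t(a,b)`, `W^M_t(a,b)`, the heart of the matter is the identity
`V ∩ φ_t⁻¹(W^N_t(a,b)) = W`. The inclusion `⊇` holds for any morphism of persistence modules.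
For `⊆`: if `x ∈ V` and `φ_t x ∈ W^N_t(a,b)`, then `ρ^N_{t,b}(φ_t x) ∈ Im ρ^N_{a,b}`, so tightness
gives `ρ^M_{t,b} x = ρ^M_{a,b} w` for some `w`; then `x = ρ^M_{a,t} w + (x - ρ^M_{a,t} w)` splits
`x` along the two summands of `W`. Given the identity, the image of `φ_t(V)` in the quotient has
dimension `dim V - dim (φ_t(V) ∩ W^N_t(a,b)) = dim V - dim φ_t(W) = dim V - dim W`.
-/

open Module Submodule LinearMap

theorem LinearMap.finrank_map_add_finrank_inf_ker {K V V₂ : Type*} [DivisionRing K]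
    [AddCommGroup V] [Module K V] [AddCommGroup V₂] [Module K V₂]
    (f : V →ₗ[K] V₂) (S : Submodule K V) [FiniteDimensional K S] :
    finrank K (S.map f) + finrank K (S ⊓ ker f : Submodule K V) = finrank K S := by
  have h := (f.domRestrict S).finrank_range_add_finrank_ker
  rwa [range_domRestrict, ker_domRestrict, ← finrank_map_subtype_eq, map_comap_subtype] at h

theorem LinearMap.finrank_map_of_injective {K V V₂ : Type*} [DivisionRing K]
    [AddCommGroup V] [Module K V] [AddCommGroup V₂] [Module K V₂]
    {f : V →ₗ[K] V₂} (hf : Function.Injective f) (S : Submodule K V) :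
    finrank K (S.map f) = finrank K S :=
  (equivMapOfInjective f hf S).finrank_eq.symm

namespace PersistenceModule

variable {F : Type*} [Field F] {J : Set ℝ}

section

variable (P : PersistenceModule F J)

theorem bond_bond_apply (r s t : J) (hrs : (r : ℝ) ≤ s) (hst : (s : ℝ) ≤ t) (x : P.space r) :
    P.bond s t hst (P.bond r s hrs x) = P.bond r t (hrs.trans hst) x := by
  rw [← LinearMap.comp_apply, P.bond_comp]

noncomputable def imagesAfter (a t : J) : Submodule F (P.space t) :=
  ⨅ s : J, ⨅ h : (a : ℝ) < (s : ℝ) ∧ (s : ℝ) < (t : ℝ), range (P.bond s t h.2.le)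

noncomputable def kernelsBeyond (t b : J) (htb : (t : ℝ) < b) : Submodule F (P.space t) :=
  ⨅ s : J, ⨅ h : (b : ℝ) < (s : ℝ), ker (P.bond t s (htb.trans h).le)

variable {a t b : J} (hat : (a : ℝ) < t) (htb : (t : ℝ) < b)

theorem V_eq : P.V a t b htb = P.imagesAfter a t ⊓ P.kernelsBeyond t b htb := rfl

theorem W_eq : P.W a t b hat htb =
    (range (P.bond a t hat.le) ⊓ P.kernelsBeyond t b htb) ⊔
      (P.imagesAfter a t ⊓ ker (P.bond t b htb.le)) := rfl

theorem range_bond_le_imagesAfter : range (P.bond a t hat.le) ≤ P.imagesAfter a t := by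
  refine le_iInf₂ fun s hs => ?_
  rintro _ ⟨x, rfl⟩
  exact ⟨P.bond a s hs.1.le x, P.bond_bond_apply a s t hs.1.le hs.2.le x⟩

theorem ker_bond_le_kernelsBeyond : ker (P.bond t b htb.le) ≤ P.kernelsBeyond t b htb := by
  refine le_iInf₂ fun s hs x hx => ?_
  rw [mem_ker, ← P.bond_bond_apply t b s htb.le hs.le, mem_ker.mp hx, map_zero]

theorem W_le_V : P.W a t b hat htb ≤ P.V a t b htb := by
  rw [W_eq, V_eq]
  exact sup_le (inf_le_inf_right _ (P.range_bond_le_imagesAfter hat))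
    (inf_le_inf_left _ (P.ker_bond_le_kernelsBeyond htb))

theorem W_le_range_sup_ker :
    P.W a t b hat htb ≤ range (P.bond a t hat.le) ⊔ ker (P.bond t b htb.le) :=
  sup_le_sup inf_le_left inf_le_right

theorem bond_mem_range_of_mem_range_sup_ker {y : P.space t}
    (hy : y ∈ range (P.bond a t hat.le) ⊔ ker (P.bond t b htb.le)) :
    P.bond t b htb.le y ∈ range (P.bond a b (hat.trans htb).le) := by
  obtain ⟨_, ⟨z, rfl⟩, k, hk, rfl⟩ := mem_sup.mp hy
  exact ⟨z, by rw [map_add, mem_ker.mp hk, add_zero, bond_bond_apply]⟩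

theorem mem_W_of_mem_V {x : P.space t} (hx : x ∈ P.V a t b htb)
    (hxb : P.bond t b htb.le x ∈ range (P.bond a b (hat.trans htb).le)) :
    x ∈ P.W a t b hat htb := by
  rw [V_eq] at hx
  rw [W_eq]
  obtain ⟨w, hw⟩ := hxb
  set y := P.bond a t hat.le w
  have hy_range : y ∈ range (P.bond a t hat.le) := ⟨w, rfl⟩
  have hxy : x - y ∈ ker (P.bond t b htb.le) := by
    rw [mem_ker, map_sub, bond_bond_apply, hw, sub_self]
  refine mem_sup.mpr ⟨y, ⟨hy_range, ?_⟩, x - y, ⟨?_, hxy⟩, add_sub_cancel y x⟩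
  · simpa using sub_mem hx.2 (P.ker_bond_le_kernelsBeyond htb hxy)
  · exact sub_mem hx.1 (P.range_bond_le_imagesAfter hat hy_range)

end

namespace Inclusion

variable {M N : PersistenceModule F J} (φ : M.Inclusion N)

theorem comm_apply (r r' : J) (h : (r : ℝ) ≤ r') (x : M.space r) :
    φ.toFun r' (M.bond r r' h x) = N.bond r r' h (φ.toFun r x) :=
  LinearMap.congr_fun (φ.comm r r' h) x

theorem range_bond_le_comap {r t : J} (h : (r : ℝ) ≤ t) :
    range (M.bond r t h) ≤ (range (N.bond r t h)).comap (φ.toFun t) := by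
  rintro _ ⟨x, rfl⟩
  exact ⟨φ.toFun r x, (φ.comm_apply r t h x).symm⟩

theorem ker_bond_le_comap {t s : J} (h : (t : ℝ) ≤ s) :
    ker (M.bond t s h) ≤ (ker (N.bond t s h)).comap (φ.toFun t) := by
  intro x hx
  rw [mem_comap, mem_ker, ← φ.comm_apply, mem_ker.mp hx, map_zero]

theorem imagesAfter_le_comap (a t : J) :
    M.imagesAfter a t ≤ (N.imagesAfter a t).comap (φ.toFun t) := by
  simp only [imagesAfter, comap_iInf]
  exact iInf₂_mono fun s hs => φ.range_bond_le_comap hs.2.le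

theorem kernelsBeyond_le_comap {t b : J} (htb : (t : ℝ) < b) :
    M.kernelsBeyond t b htb ≤ (N.kernelsBeyond t b htb).comap (φ.toFun t) := by
  simp only [kernelsBeyond, comap_iInf]
  exact iInf₂_mono fun s hs => φ.ker_bond_le_comap (htb.trans hs).le

theorem W_le_comap_W {a t b : J} (hat : (a : ℝ) < t) (htb : (t : ℝ) < b) :
    M.W a t b hat htb ≤ (N.W a t b hat htb).comap (φ.toFun t) := by
  refine sup_le ?_ ?_
  · refine (inf_le_inf (φ.range_bond_le_comap hat.le) (φ.kernelsBeyond_le_comap htb)).trans ?_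
    rw [← comap_inf]
    exact comap_mono le_sup_left
  · refine (inf_le_inf (φ.imagesAfter_le_comap a t) (φ.ker_bond_le_comap htb.le)).trans ?_
    rw [← comap_inf]
    exact comap_mono le_sup_right

variable {φ}

theorem Tight.mem_range_bond_of_apply_mem (hφ : φ.Tight) {r' r : J} (h : (r' : ℝ) < r)
    {x : M.space r} (hx : φ.toFun r x ∈ range (N.bond r' r h.le)) :
    x ∈ range (M.bond r' r h.le) := by
  obtain ⟨y, hy, hyx⟩ : φ.toFun r x ∈ (range (M.bond r' r h.le)).map (φ.toFun r) :=
    hφ r' r h ▸ ⟨⟨x, rfl⟩, hx⟩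
  exact φ.injective r hyx ▸ hy

theorem Tight.V_inf_comap_W (hφ : φ.Tight) {a t b : J} (hat : (a : ℝ) < t) (htb : (t : ℝ) < b) :
    M.V a t b htb ⊓ (N.W a t b hat htb).comap (φ.toFun t) = M.W a t b hat htb := by
  refine le_antisymm (fun x ⟨hxV, hxW⟩ => M.mem_W_of_mem_V hat htb hxV ?_)
    (le_inf (M.W_le_V hat htb) (φ.W_le_comap_W hat htb))
  refine hφ.mem_range_bond_of_apply_mem (hat.trans htb) ?_
  rw [φ.comm_apply]
  exact N.bond_mem_range_of_mem_range_sup_ker hat htb (N.W_le_range_sup_ker hat htb hxW)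

end Inclusion

end PersistenceModule

/-- Let `φ` be a tight inclusion of a persistence module `M` into a
persistence module `N` over `J`, let `a < t < b` be elements of `J`, assume `N_t` is
finite-dimensional, and let `q : N_t → N_t ⧸ W^N_t(a,b)` be the natural quotient map.
Then `dim q(φ_t(V^M_t(a,b))) = dim V^M_t(a,b) − dim W^M_t(a,b)`. -/
theorem finrank_quotient_image_V
    {F : Type*} [Field F] {J : Set ℝ} {M N : PersistenceModule F J}
    (φ : M.Inclusion N) (hφ : φ.Tight)
    (a t b : J) (hat : (a : ℝ) < (t : ℝ)) (htb : (t : ℝ) < (b : ℝ))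
    [FiniteDimensional F (N.space t)] :
    (Module.finrank F (((M.V a t b htb).map (φ.toFun t)).map (N.W a t b hat htb).mkQ) : ℤ) =
      (Module.finrank F (M.V a t b htb) : ℤ) - Module.finrank F (M.W a t b hat htb) := by
  have hinj := φ.injective t
  have : FiniteDimensional F (M.space t) := .of_injective (φ.toFun t) hinj
  have hinter : (M.V a t b htb).map (φ.toFun t) ⊓ N.W a t b hat htb =
      (M.W a t b hat htb).map (φ.toFun t) := by
    rw [map_inf_eq_map_inf_comap, hφ.V_inf_comap_W hat htb]
  have hsum := (N.W a t b hat htb).mkQ.finrank_map_add_finrank_inf_ker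
    ((M.V a t b htb).map (φ.toFun t))
  rw [ker_mkQ, hinter, finrank_map_of_injective hinj, finrank_map_of_injective hinj] at hsum
  have hle : finrank F (M.W a t b hat htb) ≤ finrank F (M.V a t b htb) :=
    Submodule.finrank_mono (M.W_le_V hat htb)
  omega
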